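/- Let 1 ≤ p0 ≤ p1 < ∞ and let A be a Young function with A ∈ Y(p0,p1). Let G be a sublinear operator of weak type (p0,p0) and of weak type (p1,p1). Then for every t > 0 and every f, |{x ∈ R^n : |Gf(x)| > t}| ≤ ∫_{R^n} A(c_{A,G} |f(x)|/t) dx, where c_{A,G} = 2 max{c_{A,p0}, c_{A,p1}} max{‖G‖_{L^{p0}→L^{p0,∞}}, ‖G‖_{L^{p1}→L^{p1,∞}}}. -/

import Mathlib

open MeasureTheory Set Filter
open scoped ENNReal NNReal BigOperators

noncomputable section

/-- An axis-parallel cube in `ℝⁿ`, given by its center and (positive) half side length. -/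
structure Cube (n : ℕ) where
  center : Fin n → ℝ
  halfside : ℝ
  halfside_pos : 0 < halfside

namespace Cube

variable {n : ℕ}

/-- The set of points of the cube. -/
def toSet (Q : Cube n) : Set (Fin n → ℝ) :=
  {x | ∀ i, |x i - Q.center i| ≤ Q.halfside}

/-- The side length `ℓ(Q)`. -/
def side (Q : Cube n) : ℝ := 2 * Q.halfside

/-- The concentric dilation `cQ` of a cube, as a set. -/
def scaled (Q : Cube n) (c : ℝ) : Set (Fin n → ℝ) :=
  {x | ∀ i, |x i - Q.center i| ≤ c * Q.halfside}

end Cube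

instance {n : ℕ} : Nonempty (Cube n) := ⟨⟨0, 1, one_pos⟩⟩

/-- Average of `f` over a cube (w.r.t. Lebesgue measure). -/
def cubeAvg {n : ℕ} (Q : Cube n) (f : (Fin n → ℝ) → ℝ) : ℝ :=
  (volume Q.toSet).toReal⁻¹ * ∫ x in Q.toSet, f x

/-- Normalized Luxemburg norm of `f` over `S` with respect to the measure `μ`:
`inf {l > 0 : (1/μ(S)) ∫_S A(|f|/l) dμ ≤ 1}`. -/
def luxNormMeas {α : Type*} [MeasurableSpace α] (A : ℝ → ℝ) (μ : Measure α) (S : Set α)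
    (f : α → ℝ) : ℝ :=
  sInf {l : ℝ | 0 < l ∧ ∫ x in S, A (|f x| / l) ∂μ ≤ (μ S).toReal}

/-- Normalized Luxemburg norm over a set in `ℝⁿ` (Lebesgue measure). -/
def luxNormOn {n : ℕ} (A : ℝ → ℝ) (S : Set (Fin n → ℝ)) (f : (Fin n → ℝ) → ℝ) : ℝ :=
  luxNormMeas A volume S f

/-- Young function: continuous, convex, increasing on `[0,∞)`, vanishing at `0`,
with superlinear growth. -/
structure IsYoung (A : ℝ → ℝ) : Prop where
  continuousOn : ContinuousOn A (Set.Ici 0)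
  convexOn : ConvexOn ℝ (Set.Ici 0) A
  monotoneOn : MonotoneOn A (Set.Ici 0)
  map_zero : A 0 = 0
  superlinear : Tendsto (fun t => A t / t) atTop atTop

/-- The complementary Young function `Ā(t) = sup_{s>0} (st - A(s))`. -/
def youngConj (A : ℝ → ℝ) (t : ℝ) : ℝ :=
  sSup ((fun s => s * t - A s) '' Set.Ioi 0)

/-- Generalized (right-continuous) inverse of an increasing function. -/
def genInv (A : ℝ → ℝ) (t : ℝ) : ℝ :=
  sInf {s : ℝ | 0 ≤ s ∧ t ≤ A s}

/-- `A ∈ 𝒴(p₀,p₁)` with explicit constants: `t^{p₀} ≤ c₀ A(t)` for `t > t_A` and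
`t^{p₁} ≤ c₁ A(t)` for `0 ≤ t ≤ t_A`. -/
def MemYWith (A : ℝ → ℝ) (p₀ p₁ c₀ c₁ tA : ℝ) : Prop :=
  1 ≤ c₀ ∧ 1 ≤ c₁ ∧ 1 ≤ tA ∧ (∀ t : ℝ, tA < t → t ^ p₀ ≤ c₀ * A t) ∧
    ∀ t : ℝ, 0 ≤ t → t ≤ tA → t ^ p₁ ≤ c₁ * A t

/-- `A ∈ 𝒴(p₀,p₁)`. -/
def MemY (A : ℝ → ℝ) (p₀ p₁ : ℝ) : Prop :=
  ∃ c₀ c₁ tA : ℝ, MemYWith A p₀ p₁ c₀ c₁ tA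

/-- The Orlicz maximal operator `M_A f(x) = sup_{Q ∋ x} ‖f‖_{A,Q}`. -/
def orliczMax {n : ℕ} (A : ℝ → ℝ) (f : (Fin n → ℝ) → ℝ) (x : Fin n → ℝ) : ℝ≥0∞ :=
  ⨆ (Q : Cube n) (_ : x ∈ Q.toSet), ENNReal.ofReal (luxNormOn A Q.toSet f)

/-- The Hardy–Littlewood maximal operator (over cubes). -/
def hlMax {n : ℕ} (f : (Fin n → ℝ) → ℝ) (x : Fin n → ℝ) : ℝ≥0∞ :=
  ⨆ (Q : Cube n) (_ : x ∈ Q.toSet), ENNReal.ofReal (cubeAvg Q (fun y => |f y|))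

/-- The measure `w dx` associated to a weight `w`. -/
def wMeas {n : ℕ} (w : (Fin n → ℝ) → ℝ) : Measure (Fin n → ℝ) :=
  volume.withDensity fun x => ENNReal.ofReal (w x)

/-- A weight: a nonnegative locally integrable function. -/
def IsWeight {n : ℕ} (w : (Fin n → ℝ) → ℝ) : Prop :=
  (∀ x, 0 ≤ w x) ∧ LocallyIntegrable w volume

/-- The Muckenhoupt `A_p` constant `[w]_{A_p}`. -/
def apConst {n : ℕ} (p : ℝ) (w : (Fin n → ℝ) → ℝ) : ℝ≥0∞ :=
  ⨆ Q : Cube n, ENNReal.ofReal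
    (cubeAvg Q w * cubeAvg Q (fun x => w x ^ (-(p - 1)⁻¹)) ^ (p - 1))

/-- The Fujii–Wilson `A_∞` constant `[w]_{A_∞} = sup_Q (1/w(Q)) ∫_Q M(wχ_Q)`. -/
def fujiiWilson {n : ℕ} (w : (Fin n → ℝ) → ℝ) : ℝ≥0∞ :=
  ⨆ Q : Cube n,
    (∫⁻ x in Q.toSet, hlMax (Q.toSet.indicator w) x) / (∫⁻ x in Q.toSet, ENNReal.ofReal (w x))

/-- The `A₁` constant `[w]_{A₁} = ess sup Mw/w`. -/
def a1Const {n : ℕ} (w : (Fin n → ℝ) → ℝ) : ℝ≥0∞ :=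
  essSup (fun x => hlMax w x / ENNReal.ofReal (w x)) volume

/-- Mean oscillation of `b` over the cube `Q`. -/
def bmoFun {n : ℕ} (b : (Fin n → ℝ) → ℝ) (Q : Cube n) : ℝ :=
  cubeAvg Q fun x => |b x - cubeAvg Q b|

/-- `b ∈ BMO`. -/
def MemBMO {n : ℕ} (b : (Fin n → ℝ) → ℝ) : Prop :=
  BddAbove (Set.range (bmoFun b))

/-- `‖b‖_{BMO}`. -/
def bmoNormR {n : ℕ} (b : (Fin n → ℝ) → ℝ) : ℝ :=
  ⨆ Q : Cube n, bmoFun b Q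

/-- One-sided generalized `A`-Hörmander constant `H_{K,A,1}`. -/
def hormConst1 {n : ℕ} (A : ℝ → ℝ) (K : (Fin n → ℝ) → (Fin n → ℝ) → ℝ) : ℝ≥0∞ :=
  ⨆ (Q : Cube n) (x : Fin n → ℝ) (_ : x ∈ Q.scaled (1/2)) (z : Fin n → ℝ)
    (_ : z ∈ Q.scaled (1/2)),
      ∑' k : ℕ,
        ENNReal.ofReal ((2 ^ (k + 1) * Q.side) ^ n *
          luxNormOn A (Q.scaled (2 ^ (k + 1)))
            ((Q.scaled (2 ^ (k + 1)) \ Q.scaled (2 ^ k)).indicator fun y => K x y - K z y))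

/-- The generalized `A`-Hörmander constant `H_{K,A} = max(H_{K,A,1}, H_{K,A,2})`. -/
def hormConst {n : ℕ} (A : ℝ → ℝ) (K : (Fin n → ℝ) → (Fin n → ℝ) → ℝ) : ℝ≥0∞ :=
  max (hormConst1 A K) (hormConst1 A (Function.swap K))

/-- `T` is an `A`-Hörmander operator with kernel `K` and `L² → L²` bound `C₂`. -/
structure IsHormOp (n : ℕ) (A : ℝ → ℝ)
    (T : ((Fin n → ℝ) → ℝ) → ((Fin n → ℝ) → ℝ))
    (K : (Fin n → ℝ) → (Fin n → ℝ) → ℝ) (C₂ : ℝ) : Prop where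
  map_add : ∀ f g, T (f + g) = T f + T g
  map_smul : ∀ (c : ℝ) f, T (c • f) = c • T f
  l2bound : ∀ f, eLpNorm (T f) 2 volume ≤ ENNReal.ofReal C₂ * eLpNorm f 2 volume
  repres : ∀ f : (Fin n → ℝ) → ℝ, ContDiff ℝ (⊤ : ℕ∞) f → HasCompactSupport f →
    ∀ x ∉ tsupport f, T f x = ∫ y, K x y * f y
  horm_ne_top : hormConst A K ≠ ⊤

/-- The iterated commutator `T_b^m`. -/
def commIter {n : ℕ} (T : ((Fin n → ℝ) → ℝ) → ((Fin n → ℝ) → ℝ)) (b : (Fin n → ℝ) → ℝ) :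
    ℕ → ((Fin n → ℝ) → ℝ) → ((Fin n → ℝ) → ℝ)
  | 0, f => T f
  | m + 1, f => fun x => b x * commIter T b m f x - commIter T b m (fun y => b y * f y) x

/-- An `η`-sparse family of cubes. -/
def IsSparseFam {n : ℕ} (η : ℝ) (S : Set (Cube n)) : Prop :=
  ∃ E : Cube n → Set (Fin n → ℝ),
    (∀ Q ∈ S, E Q ⊆ Q.toSet ∧ MeasurableSet (E Q) ∧
        ENNReal.ofReal η * volume Q.toSet ≤ volume (E Q)) ∧
      S.PairwiseDisjoint E

/-- The sparse operator `𝒜^{m,h}_{A,𝒮}(b,f)(x) = ∑_{Q ∈ 𝒮} |b(x)-b_Q|^{m-h}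
‖f |b-b_Q|^h‖_{A,Q} χ_Q(x)`. -/
def sparseOp {n : ℕ} (A : ℝ → ℝ) (S : Set (Cube n)) (b f : (Fin n → ℝ) → ℝ) (m h : ℕ)
    (x : Fin n → ℝ) : ℝ≥0∞ :=
  ∑' Q : S, (Q : Cube n).toSet.indicator
    (fun y => ENNReal.ofReal (|b y - cubeAvg (Q : Cube n) b| ^ (m - h) *
      luxNormOn A (Q : Cube n).toSet fun z => f z * |b z - cubeAvg (Q : Cube n) b| ^ h)) x

/-- `L^p(μ)` quasinorm of an `ℝ≥0∞`-valued function. -/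
def lpNormE {α : Type*} [MeasurableSpace α] (p : ℝ) (μ : Measure α) (g : α → ℝ≥0∞) : ℝ≥0∞ :=
  (∫⁻ x, g x ^ p ∂μ) ^ (1 / p)

/-- `Φ_j(t) = t log(e+t)^j`. -/
def PhiLog (j : ℕ) (t : ℝ) : ℝ := t * Real.log (Real.exp 1 + t) ^ j

/-- `T` is an `ω`-Calderón–Zygmund operator with kernel `K`, size constant `CK` and
`L² → L²` bound `C₂`. -/
structure IsCZ (n : ℕ) (T : ((Fin n → ℝ) → ℝ) → ((Fin n → ℝ) → ℝ))
    (K : (Fin n → ℝ) → (Fin n → ℝ) → ℝ) (ω : ℝ → ℝ) (CK C₂ : ℝ) : Prop where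
  map_add : ∀ f g, T (f + g) = T f + T g
  map_smul : ∀ (c : ℝ) f, T (c • f) = c • T f
  l2bound : ∀ f, eLpNorm (T f) 2 volume ≤ ENNReal.ofReal C₂ * eLpNorm f 2 volume
  repres : ∀ f : (Fin n → ℝ) → ℝ, ContDiff ℝ (⊤ : ℕ∞) f → HasCompactSupport f →
    ∀ x ∉ tsupport f, T f x = ∫ y, K x y * f y
  size : ∀ x y : Fin n → ℝ, x ≠ y → |K x y| ≤ CK / ‖x - y‖ ^ n
  smooth : ∀ x x' y : Fin n → ℝ, x ≠ y → 2 * ‖x - x'‖ < ‖x - y‖ →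
    |K x y - K x' y| + |K y x - K y x'| ≤ ω (‖x - x'‖ / ‖x - y‖) / ‖x - y‖ ^ n
  omega_cont : ContinuousOn ω (Set.Icc 0 1)
  omega_mono : MonotoneOn ω (Set.Icc 0 1)
  omega_zero : ω 0 = 0
  omega_submult : ∀ s t : ℝ, s ∈ Set.Icc (0:ℝ) 1 → t ∈ Set.Icc (0:ℝ) 1 → ω (s * t) ≤ ω s * ω t
  dini : IntegrableOn (fun t => ω t / t) (Set.Ioc (0:ℝ) 1)


/-- Real-number core inequality for the interpolation argument. -/
lemma modular_interp_aux (p c₀ M a s As : ℝ) (hp : 1 ≤ p) (hM : 1 ≤ M) (hc₀M : c₀ ≤ M)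
    (ha : 0 ≤ a) (haM : a * M ≤ s) (hAs : 0 ≤ As) (hkey : s ^ p ≤ c₀ * As) :
    a ^ p ≤ As := by
  have hM0 : (0:ℝ) < M := lt_of_lt_of_le one_pos hM
  have hMp : M ≤ M ^ p := by
    calc M = M ^ (1:ℝ) := (Real.rpow_one M).symm
    _ ≤ M ^ p := Real.rpow_le_rpow_of_exponent_le hM hp
  have hMp0 : (0:ℝ) < M ^ p := Real.rpow_pos_of_pos hM0 p
  have h1 : (a * M) ^ p ≤ s ^ p :=
    Real.rpow_le_rpow (mul_nonneg ha hM0.le) haM (le_trans zero_le_one hp)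
  rw [Real.mul_rpow ha hM0.le] at h1
  have h2 : c₀ * As ≤ M ^ p * As :=
    mul_le_mul_of_nonneg_right (hc₀M.trans hMp) hAs
  have h3 : a ^ p * M ^ p ≤ As * M ^ p := by
    calc a ^ p * M ^ p ≤ c₀ * As := h1.trans hkey
    _ ≤ M ^ p * As := h2
    _ = As * M ^ p := mul_comm _ _
  exact le_of_mul_le_mul_right h3 hMp0

/-- `eLpNorm` to the power `p` equals the lintegral of `|f|^p`. -/
lemma eLpNorm_rpow_eq_lintegral {α : Type*} [MeasurableSpace α] (μ : Measure α)
    (f : α → ℝ) (p : ℝ) (hp : 1 ≤ p) :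
    eLpNorm f (ENNReal.ofReal p) μ ^ p = ∫⁻ x, ENNReal.ofReal |f x| ^ p ∂μ := by
  have hp0 : (0:ℝ) < p := lt_of_lt_of_le one_pos hp
  have hne0 : ENNReal.ofReal p ≠ 0 := by
    simp [ENNReal.ofReal_eq_zero, not_le, hp0]
  rw [eLpNorm_eq_lintegral_rpow_enorm_toReal hne0 ENNReal.ofReal_ne_top,
    ENNReal.toReal_ofReal hp0.le, ← ENNReal.rpow_mul, one_div,
    inv_mul_cancel₀ hp0.ne', ENNReal.rpow_one]
  simp_rw [Real.enorm_eq_ofReal_abs]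

/-- modular weak type inequality via interpolation for operators of
weak types `(p₀,p₀)` and `(p₁,p₁)` and a Young function `A ∈ 𝒴(p₀,p₁)`. -/
theorem modular_interpolation (n : ℕ) (p₀ p₁ c₀ c₁ tA : ℝ) (hp₀ : 1 ≤ p₀) (hp₀p₁ : p₀ ≤ p₁)
    (A : ℝ → ℝ) (hA : IsYoung A) (hAY : MemYWith A p₀ p₁ c₀ c₁ tA)
    (G : ((Fin n → ℝ) → ℝ) → ((Fin n → ℝ) → ℝ))
    (hsub : ∀ (f g : (Fin n → ℝ) → ℝ) (x), |G (f + g) x| ≤ |G f x| + |G g x|)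
    (hsc : ∀ (c : ℝ) (f : (Fin n → ℝ) → ℝ) (x), |G (c • f) x| = |c| * |G f x|)
    (C₀ C₁ : ℝ) (hC₀ : 0 ≤ C₀) (hC₁ : 0 ≤ C₁)
    (hw₀ : ∀ f : (Fin n → ℝ) → ℝ, ∀ lam : ℝ, 0 < lam →
      volume {x | lam < |G f x|} ≤
        (ENNReal.ofReal C₀ / ENNReal.ofReal lam) ^ p₀ *
          eLpNorm f (ENNReal.ofReal p₀) volume ^ p₀)
    (hw₁ : ∀ f : (Fin n → ℝ) → ℝ, ∀ lam : ℝ, 0 < lam →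
      volume {x | lam < |G f x|} ≤
        (ENNReal.ofReal C₁ / ENNReal.ofReal lam) ^ p₁ *
          eLpNorm f (ENNReal.ofReal p₁) volume ^ p₁) :
    ∀ t : ℝ, 0 < t → ∀ f : (Fin n → ℝ) → ℝ,
      volume {x | t < |G f x|} ≤
        ∫⁻ x, ENNReal.ofReal (A (2 * max c₀ c₁ * max C₀ C₁ * |f x| / t)) := by
  intro t ht f
  obtain ⟨hc₀, hc₁, htA, hlarge, hsmall⟩ := hAY
  set M : ℝ := max c₀ c₁ with hM_def
  set C : ℝ := max C₀ C₁ with hC_def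
  have hM1 : 1 ≤ M := le_trans hc₀ (le_max_left _ _)
  have hM0 : (0:ℝ) < M := lt_of_lt_of_le one_pos hM1
  have hC0 : 0 ≤ C := le_trans hC₀ (le_max_left _ _)
  have hp₁ : 1 ≤ p₁ := hp₀.trans hp₀p₁
  set c : ℝ := 2 * M * C with hc_def
  have hc0 : 0 ≤ c := by positivity
  set s : (Fin n → ℝ) → ℝ := fun x => c * |f x| / t with hs_def
  have hs0 : ∀ x, 0 ≤ s x := fun x => by positivity
  set φ : (Fin n → ℝ) → ℝ≥0∞ := fun x => ENNReal.ofReal (A (s x)) with hφ_def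
  set E : Set (Fin n → ℝ) := {x | tA * t < c * |f x|} with hE_def
  set g : (Fin n → ℝ) → ℝ := E.indicator f with hg_def
  set h : (Fin n → ℝ) → ℝ := Eᶜ.indicator f with hh_def
  have hfgh : f = g + h := by
    rw [hg_def, hh_def, Set.indicator_self_add_compl E f]
  have ht2 : (0:ℝ) < t / 2 := by linarith
  -- A is nonnegative on [0,∞)
  have hA_nonneg : ∀ u : ℝ, 0 ≤ u → 0 ≤ A u := fun u hu => by
    have := hA.monotoneOn (Set.self_mem_Ici) (Set.mem_Ici.mpr hu) hu
    rwa [hA.map_zero] at this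
  -- splitting the level set
  have hsubset : {x | t < |G f x|} ⊆ {x | t / 2 < |G g x|} ∪ {x | t / 2 < |G h x|} := by
    intro x hx
    by_contra hcon
    rw [Set.mem_union] at hcon
    push_neg at hcon
    obtain ⟨h1, h2⟩ := hcon
    rw [Set.mem_setOf_eq, not_lt] at h1 h2
    have hx' : t < |G f x| := hx
    have : |G f x| ≤ |G g x| + |G h x| := by
      rw [hfgh]; exact hsub g h x
    linarith
  refine le_trans (measure_mono hsubset) (le_trans (measure_union_le _ _) ?_)
  -- key pointwise bounds
  have key₀ : ∀ x, (ENNReal.ofReal (C₀ / (t / 2)) * ENNReal.ofReal |g x|) ^ p₀ ≤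
      E.indicator φ x := by
    intro x
    by_cases hx : x ∈ E
    · have hgx : g x = f x := Set.indicator_of_mem hx f
      rw [Set.indicator_of_mem hx φ, hgx, ← ENNReal.ofReal_mul (by positivity),
        ENNReal.ofReal_rpow_of_nonneg (by positivity) (by linarith : (0:ℝ) ≤ p₀)]
      apply ENNReal.ofReal_le_ofReal
      have hstA : tA < s x := by
        rw [hs_def, lt_div_iff₀ ht]
        exact hx
      refine modular_interp_aux p₀ c₀ M (C₀ / (t / 2) * |f x|) (s x) (A (s x)) hp₀ hM1
        (le_max_left _ _) (by positivity) ?_ (hA_nonneg _ (hs0 x)) (hlarge (s x) hstA)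
      have hCC : C₀ ≤ C := le_max_left _ _
      have habs : (0:ℝ) ≤ |f x| := abs_nonneg _
      have hsx : s x = 2 * M * C * |f x| / t := rfl
      have h2 : C₀ / (t / 2) * |f x| * M = C₀ * 2 * |f x| * M / t := by
        field_simp
      rw [hsx, h2, div_le_div_iff₀ ht ht]
      nlinarith [mul_nonneg (mul_nonneg (mul_nonneg (sub_nonneg.mpr hCC) hM0.le) habs) ht.le]
    · have hgx : g x = 0 := Set.indicator_of_notMem hx f
      rw [hgx]
      simp only [abs_zero, ENNReal.ofReal_zero, mul_zero]
      rw [ENNReal.zero_rpow_of_pos (by linarith)]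
      exact zero_le
  have key₁ : ∀ x, (ENNReal.ofReal (C₁ / (t / 2)) * ENNReal.ofReal |h x|) ^ p₁ ≤
      Eᶜ.indicator φ x := by
    intro x
    by_cases hx : x ∈ Eᶜ
    · have hhx : h x = f x := Set.indicator_of_mem hx f
      rw [Set.indicator_of_mem hx φ, hhx, ← ENNReal.ofReal_mul (by positivity),
        ENNReal.ofReal_rpow_of_nonneg (by positivity) (by linarith : (0:ℝ) ≤ p₁)]
      apply ENNReal.ofReal_le_ofReal
      have hstA : s x ≤ tA := by
        rw [hs_def, div_le_iff₀ ht]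
        exact not_lt.mp hx
      refine modular_interp_aux p₁ c₁ M (C₁ / (t / 2) * |f x|) (s x) (A (s x)) hp₁ hM1
        (le_max_right _ _) (by positivity) ?_ (hA_nonneg _ (hs0 x))
        (hsmall (s x) (hs0 x) hstA)
      have hCC : C₁ ≤ C := le_max_right _ _
      have habs : (0:ℝ) ≤ |f x| := abs_nonneg _
      have hsx : s x = 2 * M * C * |f x| / t := rfl
      have h2 : C₁ / (t / 2) * |f x| * M = C₁ * 2 * |f x| * M / t := by
        field_simp
      rw [hsx, h2, div_le_div_iff₀ ht ht]
      nlinarith [mul_nonneg (mul_nonneg (mul_nonneg (sub_nonneg.mpr hCC) hM0.le) habs) ht.le]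
    · have hhx : h x = 0 := Set.indicator_of_notMem hx f
      rw [hhx]
      simp only [abs_zero, ENNReal.ofReal_zero, mul_zero]
      rw [ENNReal.zero_rpow_of_pos (by linarith)]
      exact zero_le
  -- bound each weak-type term
  have term : ∀ (p Cw : ℝ) (u : (Fin n → ℝ) → ℝ), 1 ≤ p → 0 ≤ Cw →
      (ENNReal.ofReal Cw / ENNReal.ofReal (t / 2)) ^ p *
        eLpNorm u (ENNReal.ofReal p) volume ^ p =
      ∫⁻ x, (ENNReal.ofReal (Cw / (t / 2)) * ENNReal.ofReal |u x|) ^ p := by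
    intro p Cw u hp hCw
    have hp0 : (0:ℝ) ≤ p := by linarith
    rw [eLpNorm_rpow_eq_lintegral volume u p hp, ← ENNReal.ofReal_div_of_pos ht2]
    rw [← lintegral_const_mul' _ _ (ENNReal.rpow_ne_top_of_nonneg hp0 ENNReal.ofReal_ne_top)]
    congr 1
    funext x
    rw [ENNReal.mul_rpow_of_nonneg _ _ hp0]
  calc volume {x | t / 2 < |G g x|} + volume {x | t / 2 < |G h x|}
      ≤ (∫⁻ x, E.indicator φ x) + ∫⁻ x, Eᶜ.indicator φ x := by
        gcongr
        · refine le_trans (hw₀ g (t / 2) ht2) ?_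
          rw [term p₀ C₀ g hp₀ hC₀]
          exact lintegral_mono key₀
        · refine le_trans (hw₁ h (t / 2) ht2) ?_
          rw [term p₁ C₁ h hp₁ hC₁]
          exact lintegral_mono key₁
    _ ≤ ∫⁻ x, (E.indicator φ x + Eᶜ.indicator φ x) := le_lintegral_add _ _
    _ = ∫⁻ x, φ x := by
        congr 1
        funext x
        by_cases hx : x ∈ E
        · rw [Set.indicator_of_mem hx, Set.indicator_of_notMem (by simpa using hx), add_zero]
        · rw [Set.indicator_of_notMem hx, Set.indicator_of_mem (by simpa using hx), zero_add]
    _ = ∫⁻ x, ENNReal.ofReal (A (2 * max c₀ c₁ * max C₀ C₁ * |f x| / t)) := rfl
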